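/- Let d ≥ e², a⃗ ∈ ℝ^k with Σ_{i=1}^k a_i = 0, and X_{a⃗} := max{e^W, e^{-W}} where W = Σ a_i log|Z_i| for independent standard Gaussians Z_i with τ² the variance of log|Z₁|. Then log log d ≤ E[ log log(d X_{a⃗}) ] ≤ log log(d/e) + 2 + log 2 + log(1 + τ‖a⃗‖₂). -/

import Mathlib

open MeasureTheory ProbabilityTheory Real Set

/-!
Write `W = ∑ aᵢ log |Zᵢ|`, so that `log (d X) = log d + |W|`. Since `∑ aᵢ = 0`, `W` is centred, and
by independence `Var W = τ² ‖a‖²`; hence `E|W| ≤ τ ‖a‖`. The lower bound is monotonicity of `log`.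
For the upper bound, split `log d + |W| = log (d/e) + (1 + |W|)`, use `a + b ≤ 2ab` for `a, b ≥ 1`,
and Jensen for the concave `log`: `E log (1 + |W|) ≤ log (1 + E|W|)`.
-/

theorem integrable_abs_rpow_mul_exp_neg_mul_sq {b : ℝ} (hb : 0 < b) {s : ℝ} (hs : -1 < s) :
    Integrable fun x : ℝ => |x| ^ s * exp (-b * x ^ 2) := by
  have hpos : IntegrableOn (fun x : ℝ => |x| ^ s * exp (-b * x ^ 2)) (Ioi 0) :=
    (integrableOn_rpow_mul_exp_neg_mul_sq hb hs).congr_fun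
      (fun x hx => by simp [abs_of_pos (mem_Ioi.mp hx)]) measurableSet_Ioi
  have hneg : IntegrableOn (fun x : ℝ => |x| ^ s * exp (-b * x ^ 2)) (Iio 0) := by
    rw [← (Measure.measurePreserving_neg (volume : Measure ℝ)).integrableOn_comp_preimage
      (Homeomorph.neg ℝ).measurableEmbedding]
    simpa only [Function.comp_def, abs_neg, neg_sq, neg_preimage, neg_Iio, neg_zero] using hpos
  rw [← integrableOn_univ, ← Iio_union_Ici (a := (0 : ℝ)), integrableOn_union,
    integrableOn_Ici_iff_integrableOn_Ioi]
  exact ⟨hneg, hpos⟩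

theorem sq_log_le_rpow_add_rpow {x : ℝ} (hx : 0 ≤ x) :
    log x ^ 2 ≤ 32 * (x ^ (2⁻¹ : ℝ) + x ^ (-2⁻¹ : ℝ)) := by
  rcases hx.eq_or_lt with rfl | hx
  · simp
  have hlog : log x ≤ 4 * x ^ (4⁻¹ : ℝ) := by
    simpa [div_eq_mul_inv, mul_comm] using log_le_rpow_div hx.le (by norm_num : (0 : ℝ) < 4⁻¹)
  have hlog_inv : -log x ≤ 4 * x ^ (-4⁻¹ : ℝ) := by
    have := log_le_rpow_div (inv_nonneg.2 hx.le) (by norm_num : (0 : ℝ) < 4⁻¹)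
    rwa [log_inv, inv_rpow hx.le, ← rpow_neg hx.le, div_inv_eq_mul, mul_comm] at this
  have hA : 0 ≤ x ^ (4⁻¹ : ℝ) := rpow_nonneg hx.le _
  have hB : 0 ≤ x ^ (-4⁻¹ : ℝ) := rpow_nonneg hx.le _
  have hA2 : x ^ (2⁻¹ : ℝ) = (x ^ (4⁻¹ : ℝ)) ^ 2 := by
    rw [← rpow_natCast, ← rpow_mul hx.le]; norm_num
  have hB2 : x ^ (-2⁻¹ : ℝ) = (x ^ (-4⁻¹ : ℝ)) ^ 2 := by
    rw [← rpow_natCast, ← rpow_mul hx.le]; norm_num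
  have habs : |log x| ≤ 4 * (x ^ (4⁻¹ : ℝ) + x ^ (-4⁻¹ : ℝ)) :=
    abs_le.2 ⟨by linarith, by linarith⟩
  rw [hA2, hB2, ← sq_abs]
  nlinarith [sq_nonneg (x ^ (4⁻¹ : ℝ) - x ^ (-4⁻¹ : ℝ)), abs_nonneg (log x)]

theorem gaussianPDFReal_zero_one_le (x : ℝ) : gaussianPDFReal 0 1 x ≤ exp (-2⁻¹ * x ^ 2) := by
  rw [gaussianPDFReal_def]
  have hc : (√(2 * π * ((1 : NNReal) : ℝ)))⁻¹ ≤ 1 := by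
    refine inv_le_one_of_one_le₀ (one_le_sqrt.2 ?_)
    push_cast; nlinarith [pi_gt_three]
  calc (√(2 * π * ((1 : NNReal) : ℝ)))⁻¹ * exp (-(x - 0) ^ 2 / (2 * ((1 : NNReal) : ℝ)))
      ≤ 1 * exp (-(x - 0) ^ 2 / (2 * ((1 : NNReal) : ℝ))) :=
        mul_le_mul_of_nonneg_right hc (exp_pos _).le
    _ = exp (-2⁻¹ * x ^ 2) := by push_cast; ring_nf

theorem memLp_two_log_abs_gaussianReal :
    MemLp (fun z : ℝ => log |z|) 2 (gaussianReal 0 1) := by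
  have hmeas : Measurable fun z : ℝ => log |z| := measurable_log.comp measurable_abs
  rw [memLp_two_iff_integrable_sq hmeas.aestronglyMeasurable,
    gaussianReal_of_var_ne_zero 0 one_ne_zero,
    integrable_withDensity_iff (measurable_gaussianPDF 0 1)
      (.of_forall fun _ => gaussianPDF_lt_top)]
  have hdom : Integrable fun x : ℝ =>
      32 * (|x| ^ (2⁻¹ : ℝ) * exp (-2⁻¹ * x ^ 2)) + 32 * (|x| ^ (-2⁻¹ : ℝ) * exp (-2⁻¹ * x ^ 2)) :=
    ((integrable_abs_rpow_mul_exp_neg_mul_sq (by norm_num) (by norm_num)).const_mul 32).add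
      ((integrable_abs_rpow_mul_exp_neg_mul_sq (by norm_num) (by norm_num)).const_mul 32)
  refine hdom.mono' (by fun_prop) (.of_forall fun x => ?_)
  rw [toReal_gaussianPDF, norm_of_nonneg (mul_nonneg (sq_nonneg _) (gaussianPDFReal_nonneg _ _ _))]
  calc log |x| ^ 2 * gaussianPDFReal 0 1 x
      ≤ 32 * (|x| ^ (2⁻¹ : ℝ) + |x| ^ (-2⁻¹ : ℝ)) * exp (-2⁻¹ * x ^ 2) :=
        mul_le_mul (sq_log_le_rpow_add_rpow (abs_nonneg x)) (gaussianPDFReal_zero_one_le x)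
          (gaussianPDFReal_nonneg _ _ _) (by positivity)
    _ = _ := by ring

section LinearCombination

variable {Ω ι 𝓧 : Type*} [MeasurableSpace Ω] [MeasurableSpace 𝓧] [Fintype ι]
  {P : Measure Ω} {ν : Measure 𝓧} {Z : ι → Ω → 𝓧} {f : 𝓧 → ℝ}

theorem memLp_sum_mul_comp {p : ENNReal} (hZ : ∀ i, MeasurePreserving (Z i) P ν) (hf : MemLp f p ν)
    (a : ι → ℝ) : MemLp (fun ω => ∑ i, a i * f (Z i ω)) p P :=
  memLp_finsetSum _ fun i _ => (hf.comp_measurePreserving (hZ i)).const_mul (a i)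

theorem integral_sum_mul_comp (hZ : ∀ i, MeasurePreserving (Z i) P ν) (hf : Integrable f ν)
    (a : ι → ℝ) : ∫ ω, ∑ i, a i * f (Z i ω) ∂P = (∑ i, a i) * ∫ x, f x ∂ν := by
  have hint : ∀ i, Integrable (fun ω => a i * f (Z i ω)) P :=
    fun i => ((hZ i).integrable_comp_of_integrable hf).const_mul (a i)
  rw [integral_finsetSum _ fun i _ => hint i, Finset.sum_mul]
  refine Finset.sum_congr rfl fun i _ => ?_
  rw [integral_const_mul, ← (hZ i).hasLaw.integral_comp hf.aestronglyMeasurable]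
  rfl

theorem variance_sum_mul_comp (hZ : ∀ i, MeasurePreserving (Z i) P ν) (hind : iIndepFun Z P)
    (hf : MemLp f 2 ν) (a : ι → ℝ) :
    Var[fun ω => ∑ i, a i * f (Z i ω); P] = (∑ i, a i ^ 2) * Var[f; ν] := by
  have hL2 : ∀ i, MemLp (fun ω => a i * f (Z i ω)) 2 P :=
    fun i => (hf.comp_measurePreserving (hZ i)).const_mul (a i)
  have hindep : iIndepFun (fun i ω => a i * f (Z i ω)) P :=
    hind.comp₀ (fun i x => a i * f x) (fun i => (hZ i).aemeasurable)
      (fun i => by rw [(hZ i).map_eq]; exact hf.aestronglyMeasurable.aemeasurable.const_mul _)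
  have hsum_fun : (fun ω => ∑ i, a i * f (Z i ω)) = ∑ i, fun ω => a i * f (Z i ω) := by
    ext ω; simp
  rw [hsum_fun, IndepFun.variance_sum (fun i _ => hL2 i)
    fun i _ j _ hij => hindep.indepFun hij, Finset.sum_mul]
  refine Finset.sum_congr rfl fun i _ => ?_
  rw [variance_const_mul, (hZ i).variance_fun_comp hf.aestronglyMeasurable.aemeasurable]

end LinearCombination

theorem integral_abs_le_sqrt_variance {Ω : Type*} [MeasurableSpace Ω] {μ : Measure Ω}
    [IsProbabilityMeasure μ] {X : Ω → ℝ} (hX : MemLp X 2 μ) (hX0 : μ[X] = 0) :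
    ∫ ω, |X ω| ∂μ ≤ √(Var[X; μ]) := by
  have h := variance_nonneg (|X|) μ
  have habs_sq : (|X| ^ 2 : Ω → ℝ) = X ^ 2 := by
    ext ω; simp [sq_abs]
  rw [variance_eq_sub hX.abs, habs_sq] at h
  rw [variance_eq_sub hX, hX0]
  exact le_sqrt_of_sq_le (by simpa using h)

theorem max_exp_exp_neg (w : ℝ) : max (exp w) (exp (-w)) = exp |w| := by
  rw [abs_eq_max_neg]
  exact (exp_monotone.map_max).symm

theorem log_add_le_log_two_add_log_add_log {a b : ℝ} (ha : 1 ≤ a) (hb : 1 ≤ b) :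
    log (a + b) ≤ log 2 + log a + log b := by
  rw [← log_mul two_ne_zero (by positivity), ← log_mul (by positivity) (by positivity)]
  exact log_le_log (by positivity) (by nlinarith)

section LogIntegral

variable {Ω : Type*} [MeasurableSpace Ω] {μ : Measure Ω} [IsProbabilityMeasure μ]

theorem integral_log_le_log_integral {Y : Ω → ℝ} (hY : Integrable Y μ) (hY1 : ∀ᵐ ω ∂μ, 1 ≤ Y ω) :
    ∫ ω, log (Y ω) ∂μ ≤ log (∫ ω, Y ω ∂μ) := by
  have hlogY : Integrable (fun ω => log (Y ω)) μ := by
    refine hY.mono' (measurable_log.comp_aemeasurable hY.aemeasurable).aestronglyMeasurable ?_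
    filter_upwards [hY1] with ω hω
    rw [norm_of_nonneg (log_nonneg hω)]
    exact log_le_self (by linarith)
  have hconcave : ConcaveOn ℝ (Ici 1) log :=
    strictConcaveOn_log_Ioi.concaveOn.subset (Ici_subset_Ioi.2 one_pos) (convex_Ici 1)
  exact hconcave.le_map_integral
    (continuousOn_log.mono fun _ hx => (zero_lt_one.trans_le (mem_Ici.1 hx)).ne')
    isClosed_Ici hY1 hY hlogY

theorem integrable_log_add_abs {W : Ω → ℝ} (hW : Integrable W μ) {c : ℝ} (hc : 1 ≤ c) :
    Integrable (fun ω => log (c + |W ω|)) μ := by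
  refine ((integrable_const c).add hW.abs).mono'
    (measurable_log.comp_aemeasurable (hW.aemeasurable.abs.const_add c)).aestronglyMeasurable
    (.of_forall fun ω => ?_)
  have h1 : 1 ≤ c + |W ω| := by linarith [abs_nonneg (W ω)]
  rw [norm_of_nonneg (log_nonneg h1)]
  exact log_le_self (by linarith)

theorem log_le_integral_log_add_abs {W : Ω → ℝ} (hW : Integrable W μ) {c : ℝ} (hc : 1 ≤ c) :
    log c ≤ ∫ ω, log (c + |W ω|) ∂μ := by
  simpa using integral_mono (integrable_const (log c)) (integrable_log_add_abs hW hc)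
    fun ω => log_le_log (by linarith) (le_add_of_nonneg_right (abs_nonneg (W ω)))

theorem integral_log_add_abs_le {W : Ω → ℝ} (hW : Integrable W μ) {c : ℝ} (hc : 2 ≤ c) :
    ∫ ω, log (c + |W ω|) ∂μ ≤ log 2 + log (c - 1) + log (1 + ∫ ω, |W ω| ∂μ) := by
  have hshift : Integrable (fun ω => 1 + |W ω|) μ := (integrable_const 1).add hW.abs
  calc ∫ ω, log (c + |W ω|) ∂μ
      ≤ ∫ ω, (log 2 + log (c - 1) + log (1 + |W ω|)) ∂μ := by
        refine integral_mono (integrable_log_add_abs hW (by linarith))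
          ((integrable_const _).add (integrable_log_add_abs hW le_rfl)) fun ω => ?_
        rw [show c + |W ω| = (c - 1) + (1 + |W ω|) by ring]
        exact log_add_le_log_two_add_log_add_log (by linarith) (by linarith [abs_nonneg (W ω)])
    _ ≤ log 2 + log (c - 1) + log (∫ ω, (1 + |W ω|) ∂μ) := by
        rw [integral_add (integrable_const _) (integrable_log_add_abs hW le_rfl), integral_const]
        simpa using integral_log_le_log_integral hshift
          (.of_forall fun ω => le_add_of_nonneg_right (abs_nonneg (W ω)))
    _ = log 2 + log (c - 1) + log (1 + ∫ ω, |W ω| ∂μ) := by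
        rw [integral_add (integrable_const _) hW.abs, integral_const]
        simp

end LogIntegral

/-- For `d ≥ e²`, `W := Σ a_i log|Z_i|` with `Z_i` i.i.d.
standard Gaussians, `Σ a_i = 0`, `τ²` the variance of `log|Z₁|`, and
`X_{a⃗} := max{e^W, e^{-W}}`, one has
`log log d ≤ E[log log(d X_{a⃗})] ≤ log log(d/e) + 2 + log 2 + log(1+τ‖a⃗‖₂)`. -/
theorem loglog_d_expectation_linear_combination
    {Ω : Type*} [MeasureSpace Ω] [IsProbabilityMeasure (ℙ : Measure Ω)]
    (d : ℝ) (hd : Real.exp 2 ≤ d)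
    (k : ℕ) (Z : Fin k → Ω → ℝ) (hZmeas : ∀ i, Measurable (Z i))
    (hZind : iIndepFun Z ℙ)
    (hZlaw : ∀ i, (ℙ : Measure Ω).map (Z i) = gaussianReal 0 1)
    (a : Fin k → ℝ) (hsum : ∑ i, a i = 0)
    (τ : ℝ) (hτ : 0 ≤ τ)
    (hτ2 : τ ^ 2
      = ProbabilityTheory.variance (fun z : ℝ => Real.log |z|) (gaussianReal 0 1)) :
    Real.log (Real.log d)
        ≤ (∫ ω, Real.log (Real.log (d *
              max (Real.exp (∑ i, a i * Real.log |Z i ω|))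
                  (Real.exp (-(∑ i, a i * Real.log |Z i ω|))))) ∂ℙ) ∧
    (∫ ω, Real.log (Real.log (d *
          max (Real.exp (∑ i, a i * Real.log |Z i ω|))
              (Real.exp (-(∑ i, a i * Real.log |Z i ω|))))) ∂ℙ)
        ≤ Real.log (Real.log (d / Real.exp 1)) + 2 + Real.log 2
            + Real.log (1 + τ * Real.sqrt (∑ i, (a i) ^ 2)) := by
  have hd0 : 0 < d := (exp_pos 2).trans_le hd
  have hlogd : 2 ≤ log d := by simpa using log_le_log (exp_pos 2) hd
  have hZ : ∀ i, MeasurePreserving (Z i) ℙ (gaussianReal 0 1) := fun i => ⟨hZmeas i, hZlaw i⟩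
  set W : Ω → ℝ := fun ω => ∑ i, a i * log |Z i ω|
  have hW : MemLp W 2 ℙ := memLp_sum_mul_comp hZ memLp_two_log_abs_gaussianReal a
  have hW_mean : ℙ[W] = 0 := by
    rw [integral_sum_mul_comp hZ (memLp_two_log_abs_gaussianReal.integrable one_le_two), hsum,
      zero_mul]
  have hW_abs : ∫ ω, |W ω| ∂ℙ ≤ τ * √(∑ i, a i ^ 2) := by
    calc ∫ ω, |W ω| ∂ℙ ≤ √(Var[W; ℙ]) := integral_abs_le_sqrt_variance hW hW_mean
      _ = τ * √(∑ i, a i ^ 2) := by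
        rw [variance_sum_mul_comp hZ hZind memLp_two_log_abs_gaussianReal, ← hτ2,
          sqrt_mul (Finset.sum_nonneg fun i _ => sq_nonneg (a i)), sqrt_sq hτ, mul_comm]
  have hintegrand : ∀ ω, log (log (d * max (exp (W ω)) (exp (-W ω)))) = log (log d + |W ω|) :=
    fun ω => by rw [max_exp_exp_neg, log_mul hd0.ne' (exp_pos _).ne', log_exp]
  rw [integral_congr_ae (.of_forall hintegrand)]
  refine ⟨log_le_integral_log_add_abs (hW.integrable one_le_two) (by linarith), ?_⟩
  have hupper := integral_log_add_abs_le (hW.integrable one_le_two) hlogd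
  have hlog_mono : log (1 + ∫ ω, |W ω| ∂ℙ) ≤ log (1 + τ * √(∑ i, a i ^ 2)) :=
    log_le_log (by positivity) (by linarith)
  rw [log_div hd0.ne' (exp_pos 1).ne', log_exp]
  linarith
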